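/- The map σ_j : osp(1|2) → End(G^j) determined by σ_j(f^+) f_i = A(l,i+1,j) f_{i+1}, σ_j(f^-) f_i = f_{i−1}, σ_j(h) = 2{σ_j(f^+),σ_j(f^-)}, σ_j(e^±) = ±2{σ_j(f^±),σ_j(f^±)} is a representation of the super Lie algebra osp(1|2): all six defining bracket relations of osp(1|2) are satisfied by the images. -/
import Mathlib

set_option maxHeartbeats 1600000

noncomputable section

/-- The structure constant `A(l,i,j) = ((−1)^{i−j}+1)/16·(i−j) +
((−1)^{i−j+1}+1)/16·(i+j−2l−1)`. -/
def A (l : ℕ) (i j : ℤ) : ℂ :=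
  (((-1 : ℂ) ^ (i - j) + 1) / 16) * ((i : ℂ) - (j : ℂ)) +
    (((-1 : ℂ) ^ (i - j + 1) + 1) / 16) * ((i : ℂ) + (j : ℂ) - 2 * (l : ℂ) - 1)

/-- The basis vector `f_r` of `G^j`, with the convention `f_r = 0` for `r`
outside `{j,…,2l−j}`; modeled inside `ℤ →₀ ℂ`. -/
def fv (l j : ℕ) (r : ℤ) : ℤ →₀ ℂ :=
  if (j : ℤ) ≤ r ∧ r ≤ 2 * l - j then Finsupp.single r 1 else 0

/-- The raising operator `σ_j(f^+) f_i = A(l,i+1,j) f_{i+1}`. -/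
def sFp (l j : ℕ) : (ℤ →₀ ℂ) →ₗ[ℂ] (ℤ →₀ ℂ) :=
  Finsupp.lsum ℂ fun i => LinearMap.toSpanSingleton ℂ _ (A l (i + 1) j • fv l j (i + 1))

/-- The lowering operator `σ_j(f^-) f_i = f_{i−1}`. -/
def sFm (l j : ℕ) : (ℤ →₀ ℂ) →ₗ[ℂ] (ℤ →₀ ℂ) :=
  Finsupp.lsum ℂ fun i => LinearMap.toSpanSingleton ℂ _ (fv l j (i - 1))

/-- `σ_j(h) = 2{σ_j(f^+), σ_j(f^-)}`. -/
def sH (l j : ℕ) : (ℤ →₀ ℂ) →ₗ[ℂ] (ℤ →₀ ℂ) :=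
  (2 : ℂ) • (sFp l j ∘ₗ sFm l j + sFm l j ∘ₗ sFp l j)

/-- `σ_j(e^+) = 2{σ_j(f^+), σ_j(f^+)} = 4 σ_j(f^+)²`. -/
def sEp (l j : ℕ) : (ℤ →₀ ℂ) →ₗ[ℂ] (ℤ →₀ ℂ) := (4 : ℂ) • (sFp l j ∘ₗ sFp l j)

/-- `σ_j(e^-) = −2{σ_j(f^-), σ_j(f^-)} = −4 σ_j(f^-)²`. -/
def sEm (l j : ℕ) : (ℤ →₀ ℂ) →ₗ[ℂ] (ℤ →₀ ℂ) := (-4 : ℂ) • (sFm l j ∘ₗ sFm l j)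

/-- The module `G^j = ℂ^{2l−2j+1}`, spanned by the `f_i`, `j ≤ i ≤ 2l−j`. -/
def Gmod (l j : ℕ) : Submodule ℂ (ℤ →₀ ℂ) :=
  Submodule.span ℂ
    {x | ∃ i : ℤ, (j : ℤ) ≤ i ∧ i ≤ 2 * l - j ∧ x = Finsupp.single i 1}

lemma neg_one_zpow_even {n : ℤ} (h : n % 2 = 0) : (-1 : ℂ) ^ n = 1 := by
  obtain ⟨k, hk⟩ := Int.even_iff.mpr h
  subst hk
  rw [← two_mul, zpow_mul]
  norm_num

lemma neg_one_zpow_odd {n : ℤ} (h : ¬ n % 2 = 0) : (-1 : ℂ) ^ n = -1 := by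
  have hodd : Odd n := Int.odd_iff.mpr (by omega)
  obtain ⟨k, hk⟩ := hodd
  subst hk
  rw [zpow_add₀ (by norm_num : (-1:ℂ) ≠ 0), zpow_mul]
  norm_num

lemma A_eq (l j : ℕ) (i : ℤ) : A l i j =
    if (i - (j:ℤ)) % 2 = 0 then ((i:ℂ) - j) / 8
    else ((i:ℂ) + j - 2*l - 1) / 8 := by
  unfold A
  split_ifs with h
  · rw [neg_one_zpow_even h, neg_one_zpow_odd (by omega)]
    push_cast; ring
  · rw [neg_one_zpow_odd h, neg_one_zpow_even (by omega)]
    push_cast; ring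

lemma A_eqL (l j : ℕ) (L : ℤ) (hL : 2*(l:ℤ) - j = L) (i : ℤ) : A l i j =
    if (i - (j:ℤ)) % 2 = 0 then ((i:ℂ) - j) / 8
    else ((i:ℂ) - L - 1) / 8 := by
  have hC : 2*(l:ℂ) - j = L := by exact_mod_cast congrArg (Int.cast : ℤ → ℂ) hL
  rw [A_eq]
  split_ifs
  · rfl
  · rw [show ((i:ℂ) + j - 2*l - 1) = (i:ℂ) - (2*(l:ℂ) - j) - 1 by ring, hC]

lemma sFp_single (l j : ℕ) (r : ℤ) :
    sFp l j (Finsupp.single r 1) = A l (r+1) j • fv l j (r+1) := by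
  rw [sFp, Finsupp.lsum_single, LinearMap.toSpanSingleton_apply, one_smul]

lemma sFm_single (l j : ℕ) (r : ℤ) :
    sFm l j (Finsupp.single r 1) = fv l j (r-1) := by
  rw [sFm, Finsupp.lsum_single, LinearMap.toSpanSingleton_apply, one_smul]
lemma rel1 (l j : ℕ) (i : ℤ) (h1 : (j:ℤ) ≤ i) (h2 : i ≤ 2*(l:ℤ) - j) :
    sH l j (sEp l j (Finsupp.single i 1)) - sEp l j (sH l j (Finsupp.single i 1)) = sEp l j (Finsupp.single i 1) := by
  obtain ⟨L, hL⟩ : ∃ L : ℤ, 2*(l:ℤ) - j = L := ⟨_, rfl⟩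
  have h2' : i ≤ L := by omega
  have hc1 : i = (j:ℤ) ∨ i = (j:ℤ)+1 ∨ i = (j:ℤ)+2 ∨ (j:ℤ)+3 ≤ i := by omega
  have hc2 : L = i ∨ L = i+1 ∨ L = i+2 ∨ i+3 ≤ L := by omega
  clear h1 h2 h2'
  rcases hc1 with h|h|h|h <;> rcases hc2 with h'|h'|h'|h' <;> try subst h
  all_goals try subst h'
  all_goals (
    simp only [sH, sEp, sEm, LinearMap.smul_apply, LinearMap.add_apply, LinearMap.comp_apply,
      map_add, map_smul, map_zero, smul_zero, sFp_single, sFm_single, fv, hL, smul_ite,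
      apply_ite (⇑(sFp l j)), apply_ite (⇑(sFm l j)), smul_smul,
      add_sub_cancel_right, sub_add_cancel] <;>
    split_ifs <;>
    first
      | (exfalso; omega)
      | (match_scalars <;> (simp only [A_eqL l j _ hL]; split_ifs <;>
          first | (exfalso; omega) | (push_cast; ring))))

lemma rel2 (l j : ℕ) (i : ℤ) (h1 : (j:ℤ) ≤ i) (h2 : i ≤ 2*(l:ℤ) - j) :
    sH l j (sEm l j (Finsupp.single i 1)) - sEm l j (sH l j (Finsupp.single i 1)) = -sEm l j (Finsupp.single i 1) := by
  obtain ⟨L, hL⟩ : ∃ L : ℤ, 2*(l:ℤ) - j = L := ⟨_, rfl⟩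
  have h2' : i ≤ L := by omega
  have hc1 : i = (j:ℤ) ∨ i = (j:ℤ)+1 ∨ i = (j:ℤ)+2 ∨ (j:ℤ)+3 ≤ i := by omega
  have hc2 : L = i ∨ L = i+1 ∨ L = i+2 ∨ i+3 ≤ L := by omega
  clear h1 h2 h2'
  rcases hc1 with h|h|h|h <;> rcases hc2 with h'|h'|h'|h' <;> try subst h
  all_goals try subst h'
  all_goals (
    simp only [sH, sEp, sEm, LinearMap.smul_apply, LinearMap.add_apply, LinearMap.comp_apply,
      map_add, map_smul, map_zero, smul_zero, sFp_single, sFm_single, fv, hL, smul_ite,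
      apply_ite (⇑(sFp l j)), apply_ite (⇑(sFm l j)), smul_smul,
      add_sub_cancel_right, sub_add_cancel] <;>
    split_ifs <;>
    first
      | (exfalso; omega)
      | (match_scalars <;> (simp only [A_eqL l j _ hL]; split_ifs <;>
          first | (exfalso; omega) | (push_cast; ring))))

lemma rel3 (l j : ℕ) (i : ℤ) (h1 : (j:ℤ) ≤ i) (h2 : i ≤ 2*(l:ℤ) - j) :
    sEp l j (sEm l j (Finsupp.single i 1)) - sEm l j (sEp l j (Finsupp.single i 1)) = (2 : ℂ) • sH l j (Finsupp.single i 1) := by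
  obtain ⟨L, hL⟩ : ∃ L : ℤ, 2*(l:ℤ) - j = L := ⟨_, rfl⟩
  have h2' : i ≤ L := by omega
  have hc1 : i = (j:ℤ) ∨ i = (j:ℤ)+1 ∨ i = (j:ℤ)+2 ∨ (j:ℤ)+3 ≤ i := by omega
  have hc2 : L = i ∨ L = i+1 ∨ L = i+2 ∨ i+3 ≤ L := by omega
  clear h1 h2 h2'
  rcases hc1 with h|h|h|h <;> rcases hc2 with h'|h'|h'|h' <;> try subst h
  all_goals try subst h'
  all_goals (
    simp only [sH, sEp, sEm, LinearMap.smul_apply, LinearMap.add_apply, LinearMap.comp_apply,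
      map_add, map_smul, map_zero, smul_zero, sFp_single, sFm_single, fv, hL, smul_ite,
      apply_ite (⇑(sFp l j)), apply_ite (⇑(sFm l j)), smul_smul,
      add_sub_cancel_right, sub_add_cancel] <;>
    split_ifs <;>
    first
      | (exfalso; omega)
      | (match_scalars <;> (simp only [A_eqL l j _ hL]; split_ifs <;>
          first | (exfalso; omega) | (push_cast; ring))))

lemma rel4 (l j : ℕ) (i : ℤ) (h1 : (j:ℤ) ≤ i) (h2 : i ≤ 2*(l:ℤ) - j) :
    sH l j (sFp l j (Finsupp.single i 1)) - sFp l j (sH l j (Finsupp.single i 1)) = (1 / 2 : ℂ) • sFp l j (Finsupp.single i 1) := by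
  obtain ⟨L, hL⟩ : ∃ L : ℤ, 2*(l:ℤ) - j = L := ⟨_, rfl⟩
  have h2' : i ≤ L := by omega
  have hc1 : i = (j:ℤ) ∨ i = (j:ℤ)+1 ∨ i = (j:ℤ)+2 ∨ (j:ℤ)+3 ≤ i := by omega
  have hc2 : L = i ∨ L = i+1 ∨ L = i+2 ∨ i+3 ≤ L := by omega
  clear h1 h2 h2'
  rcases hc1 with h|h|h|h <;> rcases hc2 with h'|h'|h'|h' <;> try subst h
  all_goals try subst h'
  all_goals (
    simp only [sH, sEp, sEm, LinearMap.smul_apply, LinearMap.add_apply, LinearMap.comp_apply,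
      map_add, map_smul, map_zero, smul_zero, sFp_single, sFm_single, fv, hL, smul_ite,
      apply_ite (⇑(sFp l j)), apply_ite (⇑(sFm l j)), smul_smul,
      add_sub_cancel_right, sub_add_cancel] <;>
    split_ifs <;>
    first
      | (exfalso; omega)
      | (match_scalars <;> (simp only [A_eqL l j _ hL]; split_ifs <;>
          first | (exfalso; omega) | (push_cast; ring))))

lemma rel5 (l j : ℕ) (i : ℤ) (h1 : (j:ℤ) ≤ i) (h2 : i ≤ 2*(l:ℤ) - j) :
    sH l j (sFm l j (Finsupp.single i 1)) - sFm l j (sH l j (Finsupp.single i 1)) = (-(1 / 2) : ℂ) • sFm l j (Finsupp.single i 1) := by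
  obtain ⟨L, hL⟩ : ∃ L : ℤ, 2*(l:ℤ) - j = L := ⟨_, rfl⟩
  have h2' : i ≤ L := by omega
  have hc1 : i = (j:ℤ) ∨ i = (j:ℤ)+1 ∨ i = (j:ℤ)+2 ∨ (j:ℤ)+3 ≤ i := by omega
  have hc2 : L = i ∨ L = i+1 ∨ L = i+2 ∨ i+3 ≤ L := by omega
  clear h1 h2 h2'
  rcases hc1 with h|h|h|h <;> rcases hc2 with h'|h'|h'|h' <;> try subst h
  all_goals try subst h'
  all_goals (
    simp only [sH, sEp, sEm, LinearMap.smul_apply, LinearMap.add_apply, LinearMap.comp_apply,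
      map_add, map_smul, map_zero, smul_zero, sFp_single, sFm_single, fv, hL, smul_ite,
      apply_ite (⇑(sFp l j)), apply_ite (⇑(sFm l j)), smul_smul,
      add_sub_cancel_right, sub_add_cancel] <;>
    split_ifs <;>
    first
      | (exfalso; omega)
      | (match_scalars <;> (simp only [A_eqL l j _ hL]; split_ifs <;>
          first | (exfalso; omega) | (push_cast; ring))))

lemma rel6 (l j : ℕ) (i : ℤ) (h1 : (j:ℤ) ≤ i) (h2 : i ≤ 2*(l:ℤ) - j) :
    sFp l j (sFm l j (Finsupp.single i 1)) + sFm l j (sFp l j (Finsupp.single i 1)) = (1 / 2 : ℂ) • sH l j (Finsupp.single i 1) := by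
  simp only [sH, sEp, sEm, LinearMap.smul_apply, LinearMap.add_apply, LinearMap.comp_apply]
  module

lemma rel7 (l j : ℕ) (i : ℤ) (h1 : (j:ℤ) ≤ i) (h2 : i ≤ 2*(l:ℤ) - j) :
    sEp l j (sFm l j (Finsupp.single i 1)) - sFm l j (sEp l j (Finsupp.single i 1)) = -sFp l j (Finsupp.single i 1) := by
  obtain ⟨L, hL⟩ : ∃ L : ℤ, 2*(l:ℤ) - j = L := ⟨_, rfl⟩
  have h2' : i ≤ L := by omega
  have hc1 : i = (j:ℤ) ∨ i = (j:ℤ)+1 ∨ i = (j:ℤ)+2 ∨ (j:ℤ)+3 ≤ i := by omega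
  have hc2 : L = i ∨ L = i+1 ∨ L = i+2 ∨ i+3 ≤ L := by omega
  clear h1 h2 h2'
  rcases hc1 with h|h|h|h <;> rcases hc2 with h'|h'|h'|h' <;> try subst h
  all_goals try subst h'
  all_goals (
    simp only [sH, sEp, sEm, LinearMap.smul_apply, LinearMap.add_apply, LinearMap.comp_apply,
      map_add, map_smul, map_zero, smul_zero, sFp_single, sFm_single, fv, hL, smul_ite,
      apply_ite (⇑(sFp l j)), apply_ite (⇑(sFm l j)), smul_smul,
      add_sub_cancel_right, sub_add_cancel] <;>
    split_ifs <;>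
    first
      | (exfalso; omega)
      | (match_scalars <;> (simp only [A_eqL l j _ hL]; split_ifs <;>
          first | (exfalso; omega) | (push_cast; ring))))

lemma rel8 (l j : ℕ) (i : ℤ) (h1 : (j:ℤ) ≤ i) (h2 : i ≤ 2*(l:ℤ) - j) :
    sEm l j (sFp l j (Finsupp.single i 1)) - sFp l j (sEm l j (Finsupp.single i 1)) = -sFm l j (Finsupp.single i 1) := by
  obtain ⟨L, hL⟩ : ∃ L : ℤ, 2*(l:ℤ) - j = L := ⟨_, rfl⟩
  have h2' : i ≤ L := by omega
  have hc1 : i = (j:ℤ) ∨ i = (j:ℤ)+1 ∨ i = (j:ℤ)+2 ∨ (j:ℤ)+3 ≤ i := by omega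
  have hc2 : L = i ∨ L = i+1 ∨ L = i+2 ∨ i+3 ≤ L := by omega
  clear h1 h2 h2'
  rcases hc1 with h|h|h|h <;> rcases hc2 with h'|h'|h'|h' <;> try subst h
  all_goals try subst h'
  all_goals (
    simp only [sH, sEp, sEm, LinearMap.smul_apply, LinearMap.add_apply, LinearMap.comp_apply,
      map_add, map_smul, map_zero, smul_zero, sFp_single, sFm_single, fv, hL, smul_ite,
      apply_ite (⇑(sFp l j)), apply_ite (⇑(sFm l j)), smul_smul,
      add_sub_cancel_right, sub_add_cancel] <;>
    split_ifs <;>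
    first
      | (exfalso; omega)
      | (match_scalars <;> (simp only [A_eqL l j _ hL]; split_ifs <;>
          first | (exfalso; omega) | (push_cast; ring))))

lemma rel9 (l j : ℕ) (i : ℤ) (h1 : (j:ℤ) ≤ i) (h2 : i ≤ 2*(l:ℤ) - j) :
    sFp l j (sFp l j (Finsupp.single i 1)) + sFp l j (sFp l j (Finsupp.single i 1)) = (1 / 2 : ℂ) • sEp l j (Finsupp.single i 1) := by
  simp only [sH, sEp, sEm, LinearMap.smul_apply, LinearMap.add_apply, LinearMap.comp_apply]
  module

lemma rel10 (l j : ℕ) (i : ℤ) (h1 : (j:ℤ) ≤ i) (h2 : i ≤ 2*(l:ℤ) - j) :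
    sFm l j (sFm l j (Finsupp.single i 1)) + sFm l j (sFm l j (Finsupp.single i 1)) = (-(1 / 2) : ℂ) • sEm l j (Finsupp.single i 1) := by
  simp only [sH, sEp, sEm, LinearMap.smul_apply, LinearMap.add_apply, LinearMap.comp_apply]
  module

/-- `σ_j` is a representation of the super Lie algebra `osp(1|2)`:
all six defining bracket relations hold on the basis vectors `f_i` of `G^j`. -/
theorem sigma_j_is_osp_representation (l j : ℕ) (hl : 1 ≤ l) (hj : j ≤ l) :
    ∀ i : ℤ, (j : ℤ) ≤ i → i ≤ 2 * l - j →
      -- [h, e^±] = ±e^±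
      (sH l j (sEp l j (Finsupp.single i 1)) - sEp l j (sH l j (Finsupp.single i 1)) =
        sEp l j (Finsupp.single i 1)) ∧
      (sH l j (sEm l j (Finsupp.single i 1)) - sEm l j (sH l j (Finsupp.single i 1)) =
        -sEm l j (Finsupp.single i 1)) ∧
      -- [e^+, e^-] = 2h
      (sEp l j (sEm l j (Finsupp.single i 1)) - sEm l j (sEp l j (Finsupp.single i 1)) =
        (2 : ℂ) • sH l j (Finsupp.single i 1)) ∧
      -- [h, f^±] = ±(1/2) f^±
      (sH l j (sFp l j (Finsupp.single i 1)) - sFp l j (sH l j (Finsupp.single i 1)) =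
        (1 / 2 : ℂ) • sFp l j (Finsupp.single i 1)) ∧
      (sH l j (sFm l j (Finsupp.single i 1)) - sFm l j (sH l j (Finsupp.single i 1)) =
        (-(1 / 2) : ℂ) • sFm l j (Finsupp.single i 1)) ∧
      -- {f^+, f^-} = (1/2) h
      (sFp l j (sFm l j (Finsupp.single i 1)) + sFm l j (sFp l j (Finsupp.single i 1)) =
        (1 / 2 : ℂ) • sH l j (Finsupp.single i 1)) ∧
      -- [e^±, f^∓] = −f^±
      (sEp l j (sFm l j (Finsupp.single i 1)) - sFm l j (sEp l j (Finsupp.single i 1)) =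
        -sFp l j (Finsupp.single i 1)) ∧
      (sEm l j (sFp l j (Finsupp.single i 1)) - sFp l j (sEm l j (Finsupp.single i 1)) =
        -sFm l j (Finsupp.single i 1)) ∧
      -- {f^±, f^±} = ±(1/2) e^±
      (sFp l j (sFp l j (Finsupp.single i 1)) + sFp l j (sFp l j (Finsupp.single i 1)) =
        (1 / 2 : ℂ) • sEp l j (Finsupp.single i 1)) ∧
      (sFm l j (sFm l j (Finsupp.single i 1)) + sFm l j (sFm l j (Finsupp.single i 1)) =
        (-(1 / 2) : ℂ) • sEm l j (Finsupp.single i 1)) := by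
  intro i h1 h2
  exact ⟨rel1 l j i h1 h2, rel2 l j i h1 h2, rel3 l j i h1 h2, rel4 l j i h1 h2,
    rel5 l j i h1 h2, rel6 l j i h1 h2, rel7 l j i h1 h2, rel8 l j i h1 h2,
    rel9 l j i h1 h2, rel10 l j i h1 h2⟩
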